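/- arXiv:1312.2896 — 2 statements merged into one kernel-verified Lean document; each statement's English description precedes it below -/
import Mathlib

section
/- Let N, l ≥ 1 be natural numbers and suppose that every subset A' of C_N = {0,1,-1}^N ⊆ ℤ^N which contains all standard basis vectors and is symmetric admits a subset of cardinality l that is difference-free with respect to A'. Let A be a subset of C_{N+1} containing all N+1 standard basis vectors and symmetric, and let B = {x_1, …, x_l} be a subset of pr_N A with |B| = l such that x_i - x_j ∉ pr_N A for all 1 ≤ i < j ≤ l. Then there exist ξ_1, …, ξ_l ∈ {-1,0,1} with (x_i, ξ_i) ∈ A for each i, and z ∈ A, such that the set B' = {(x_1,ξ_1), …, (x_l,ξ_l), z} has cardinality l+1 and x - y ∉ A for all distinct x, y ∈ B'. -/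
lemma snoc_sub (N : ℕ) (a b : Fin N → ℤ) (s t : ℤ) :
    (Fin.snoc a s : Fin (N+1) → ℤ) - Fin.snoc b t = Fin.snoc (a - b) (s - t) := by
  funext i
  refine Fin.lastCases ?_ ?_ i <;> simp

lemma snoc_neg (N : ℕ) (a : Fin N → ℤ) (s : ℤ) :
    -(Fin.snoc a s : Fin (N+1) → ℤ) = Fin.snoc (-a) (-s) := by
  funext i
  refine Fin.lastCases ?_ ?_ i <;> simp

/-- **Proposition 2.5.** Suppose `N → l`, i.e. every symmetric subset `A'` of the cube
`{0,1,-1}^N` containing all basis vectors admits a difference-free subset of size `l`.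
Let `A ⊆ {0,1,-1}^{N+1}` contain all basis vectors and be symmetric, and let
`x 1, …, x l` be distinct elements of `pr_N A` with `x i - x j ∉ pr_N A` for `i < j`.
Then there are extensions `(x i, ξ i) ∈ A` and a `z ∈ A` such that the set
`{(x 1, ξ 1), …, (x l, ξ l), z}` has `l + 1` elements and is difference-free w.r.t. `A`. -/
theorem extension_step (N l : ℕ) (hN : 1 ≤ N) (hl : 1 ≤ l)
    (H : ∀ A' : Set (Fin N → ℤ), A' ⊆ {v | ∀ i, v i ∈ ({0, 1, -1} : Set ℤ)} →
      (∀ k : Fin N, Pi.single k (1 : ℤ) ∈ A') → (∀ v ∈ A', -v ∈ A') →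
      ∃ B : Finset (Fin N → ℤ), ↑B ⊆ A' ∧ B.card = l ∧
        ∀ u ∈ B, ∀ v ∈ B, u ≠ v → u - v ∉ A')
    (A : Set (Fin (N + 1) → ℤ))
    (hcube : A ⊆ {v | ∀ i, v i ∈ ({0, 1, -1} : Set ℤ)})
    (hbasis : ∀ k : Fin (N + 1), Pi.single k (1 : ℤ) ∈ A)
    (hsym : ∀ v ∈ A, -v ∈ A)
    (x : Fin l → (Fin N → ℤ)) (hxinj : Function.Injective x)
    (hxpr : ∀ i, x i ∈ (fun v : Fin (N + 1) → ℤ => v ∘ Fin.castSucc) '' A)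
    (hdf : ∀ i j : Fin l, i < j →
      x i - x j ∉ (fun v : Fin (N + 1) → ℤ => v ∘ Fin.castSucc) '' A) :
    ∃ (ξ : Fin l → ℤ) (z : Fin (N + 1) → ℤ),
      (∀ i, ξ i ∈ ({0, 1, -1} : Set ℤ)) ∧ (∀ i, Fin.snoc (x i) (ξ i) ∈ A) ∧ z ∈ A ∧
      (insert z (Set.range fun i => Fin.snoc (x i) (ξ i))).ncard = l + 1 ∧
      ∀ u ∈ insert z (Set.range fun i => Fin.snoc (x i) (ξ i)),
        ∀ v ∈ insert z (Set.range fun i => Fin.snoc (x i) (ξ i)),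
          u ≠ v → u - v ∉ A := by
  classical
  -- choose the "minimal" extension of each x i
  set ξ : Fin l → ℤ := fun i =>
    if Fin.snoc (x i) (-1) ∈ A then -1 else if Fin.snoc (x i) 0 ∈ A then 0 else 1 with hξ
  -- each snoc (x i) (ξ i) is in A
  have hext : ∀ i, Fin.snoc (x i) (ξ i) ∈ A := by
    intro i
    obtain ⟨v, hv, hvx⟩ := hxpr i
    have hvs : v = Fin.snoc (x i) (v (Fin.last N)) := by
      funext j
      refine Fin.lastCases ?_ ?_ j
      · simp
      · intro j; rw [← hvx]; simp
    have hlast := hcube hv (Fin.last N)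
    simp only [hξ]
    by_cases h1 : Fin.snoc (x i) (-1) ∈ A
    · simpa [h1] using h1
    · by_cases h0 : Fin.snoc (x i) 0 ∈ A
      · simpa [h1, h0] using h0
      · simp only [h1, h0, if_false]
        rcases hlast with h | h | h
        · exfalso; apply h0; rw [hvs, h] at hv; exact hv
        · rw [hvs, h] at hv; exact hv
        · exfalso; apply h1; rw [hvs, h] at hv; exact hv
  have hξcube : ∀ i, ξ i ∈ ({0, 1, -1} : Set ℤ) := by
    intro i
    simp only [hξ]
    split_ifs <;> simp
  -- the gap property: snoc (x i) (ξ i - 1) ∉ A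
  have hgap : ∀ i, Fin.snoc (x i) (ξ i - 1) ∉ A := by
    intro i hmem
    by_cases h1 : Fin.snoc (x i) (-1) ∈ A
    · have : ξ i = -1 := by simp [hξ, h1]
      rw [this] at hmem
      have := hcube hmem (Fin.last N)
      simp at this
    · by_cases h0 : Fin.snoc (x i) 0 ∈ A
      · have : ξ i = 0 := by simp [hξ, h1, h0]
        rw [this] at hmem
        norm_num at hmem
        exact h1 hmem
      · have : ξ i = 1 := by simp [hξ, h1, h0]
        rw [this] at hmem
        norm_num at hmem
        exact h0 hmem
  -- z is the last basis vector
  set z : Fin (N + 1) → ℤ := Fin.snoc (0 : Fin N → ℤ) 1 with hz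
  have hzA : z ∈ A := by
    have : z = Pi.single (Fin.last N) (1 : ℤ) := by
      funext j
      refine Fin.lastCases ?_ ?_ j
      · simp [hz]
      · intro j
        simp [hz, Pi.single_eq_of_ne (Fin.castSucc_lt_last j).ne]
    rw [this]; exact hbasis _
  -- projection of elements of A lies in pr A
  have hproj : ∀ (c : Fin N → ℤ) (d : ℤ), (Fin.snoc c d : Fin (N+1) → ℤ) ∈ A →
      c ∈ (fun v : Fin (N + 1) → ℤ => v ∘ Fin.castSucc) '' A := by
    intro c d hcd
    exact ⟨Fin.snoc c d, hcd, by funext j; simp⟩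
  -- snoc differences of distinct x's are not in A
  have hpair : ∀ i j : Fin l, i ≠ j →
      Fin.snoc (x i) (ξ i) - Fin.snoc (x j) (ξ j) ∉ A := by
    intro i j hij hmem
    rw [snoc_sub] at hmem
    rcases lt_or_gt_of_ne hij with h | h
    · exact hdf i j h (hproj _ _ hmem)
    · have hneg := hsym _ hmem
      rw [snoc_neg] at hneg
      have : -(x i - x j) = x j - x i := by ring
      rw [this] at hneg
      exact hdf j i h (hproj _ _ hneg)
  -- z differs from each snoc (x i) (ξ i)
  have hzne : ∀ i, z ≠ Fin.snoc (x i) (ξ i) := by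
    intro i heq
    have hx0 : x i = 0 := by
      funext j
      have := congrFun heq (Fin.castSucc j)
      simpa [hz] using this.symm
    have hξ1 : ξ i = 1 := by
      have := congrFun heq (Fin.last N)
      simpa [hz] using this.symm
    -- but (0, -1) = -z ∈ A, so ξ i would have been -1
    have hm : Fin.snoc (x i) (-1 : ℤ) ∈ A := by
      have := hsym z hzA
      rw [hz, snoc_neg] at this
      simpa [hx0] using this
    have : ξ i = -1 := by simp [hξ, hm]
    omega
  have hzsub : ∀ i, z - Fin.snoc (x i) (ξ i) ∉ A := by
    intro i hmem
    rw [hz, snoc_sub] at hmem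
    have hneg := hsym _ hmem
    rw [snoc_neg] at hneg
    have h1 : -((0 : Fin N → ℤ) - x i) = x i := by ring
    have h2 : -(1 - ξ i) = ξ i - 1 := by ring
    rw [h1, h2] at hneg
    exact hgap i hneg
  have hsubz : ∀ i, Fin.snoc (x i) (ξ i) - z ∉ A := by
    intro i hmem
    rw [hz, snoc_sub] at hmem
    have h1 : x i - 0 = x i := by ring
    rw [h1] at hmem
    exact hgap i hmem
  -- injectivity of the snoc family
  have hfinj : Function.Injective (fun i => (Fin.snoc (x i) (ξ i) : Fin (N+1) → ℤ)) := by
    intro i j hij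
    apply hxinj
    funext k
    have := congrFun hij (Fin.castSucc k)
    simpa using this
  have hznr : z ∉ Set.range fun i => (Fin.snoc (x i) (ξ i) : Fin (N+1) → ℤ) := by
    rintro ⟨i, hi⟩
    exact hzne i hi.symm
  refine ⟨ξ, z, hξcube, hext, hzA, ?_, ?_⟩
  · rw [Set.ncard_insert_of_notMem hznr (Set.finite_range _)]
    congr 1
    rw [← Set.image_univ, Set.ncard_image_of_injective _ hfinj, Set.ncard_univ]
    simp
  · rintro u hu v hv huv hmem
    rcases hu with rfl | ⟨i, rfl⟩ <;> rcases hv with rfl | ⟨j, rfl⟩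
    · exact huv rfl
    · exact hzsub j hmem
    · exact hsubz i hmem
    · exact hpair i j (fun h => huv (by rw [h])) hmem
end

section
/- (K_ℂ(2n+1) ≤ n.) For every n ≥ 1, if A is a subset of V_n = {0, 1, -1, i, -i}^n ⊆ ℂ^n such that (a) every standard basis vector e_k (1 ≤ k ≤ n) belongs to A, and (b) x ∈ A implies i·x ∈ A, then there exists a subset B of A with |B| = 2n+1 such that x - y ∉ A for all distinct x, y ∈ B. -/
private lemma one_sub_I_notMem :
    (1 : ℂ) - Complex.I ∉ ({0, 1, -1, Complex.I, -Complex.I} : Set ℂ) := by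
  intro h
  simp only [Set.mem_insert_iff, Set.mem_singleton_iff, Complex.ext_iff] at h
  norm_num at h

private lemma I_sub_one_notMem :
    Complex.I - 1 ∉ ({0, 1, -1, Complex.I, -Complex.I} : Set ℂ) := by
  intro h
  simp only [Set.mem_insert_iff, Set.mem_singleton_iff, Complex.ext_iff] at h
  norm_num at h

private lemma snoc_sub_s14 {n : ℕ} (y y' : Fin n → ℂ) (c c' : ℂ) :
    (Fin.snoc y c - Fin.snoc y' c' : Fin (n+1) → ℂ) = Fin.snoc (y - y') (c - c') := by
  funext j
  refine Fin.lastCases ?_ (fun i => ?_) j <;> simp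

private lemma snoc_smul {n : ℕ} (a : ℂ) (y : Fin n → ℂ) (c : ℂ) :
    a • (Fin.snoc y c : Fin (n+1) → ℂ) = Fin.snoc (a • y) (a * c) := by
  funext j
  refine Fin.lastCases ?_ (fun i => ?_) j <;> simp

private lemma snoc_single {n : ℕ} (k : Fin n) :
    (Fin.snoc (Pi.single k (1:ℂ)) (0:ℂ) : Fin (n+1) → ℂ) = Pi.single (Fin.castSucc k) 1 := by
  funext j
  refine Fin.lastCases ?_ (fun i => ?_) j
  · simp [Pi.single_apply, (Fin.castSucc_lt_last k).ne']
  · simp [Pi.single_apply, Fin.castSucc_inj]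

private lemma snoc_zero_single {n : ℕ} :
    (Fin.snoc (0 : Fin n → ℂ) (1:ℂ) : Fin (n+1) → ℂ) = Pi.single (Fin.last n) 1 := by
  funext j
  refine Fin.lastCases ?_ (fun i => ?_) j
  · simp
  · simp [Pi.single_apply, (Fin.castSucc_lt_last i).ne]

private lemma snoc_inj {n : ℕ} (c : ℂ) :
    Function.Injective (fun y : Fin n → ℂ => (Fin.snoc y c : Fin (n+1) → ℂ)) := by
  intro y y' h
  simpa using congrArg Fin.init h

private lemma cube_finite (n : ℕ) :
    ({v : Fin n → ℂ | ∀ t, v t ∈ ({0, 1, -1, Complex.I, -Complex.I} : Set ℂ)}).Finite := by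
  have hS : ({0, 1, -1, Complex.I, -Complex.I} : Set ℂ).Finite := by
    exact (Set.finite_singleton _).insert _ |>.insert _ |>.insert _ |>.insert _
  have : {v : Fin n → ℂ | ∀ t, v t ∈ ({0, 1, -1, Complex.I, -Complex.I} : Set ℂ)}
      = Set.pi Set.univ (fun _ => ({0, 1, -1, Complex.I, -Complex.I} : Set ℂ)) := by
    ext v; simp [Set.mem_pi]
  rw [this]
  exact Set.Finite.pi (fun _ => hS)

/-- Auxiliary induction: a difference-free set of size `2n` on which some real-linear
functional is strictly positive. -/
private lemma kottman_aux : ∀ (n : ℕ) (A : Set (Fin n → ℂ)),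
    (A ⊆ {v | ∀ t, v t ∈ ({0, 1, -1, Complex.I, -Complex.I} : Set ℂ)}) →
    (∀ k : Fin n, Pi.single k (1 : ℂ) ∈ A) →
    (∀ v ∈ A, Complex.I • v ∈ A) →
    ∃ (B : Finset (Fin n → ℂ)) (φ : (Fin n → ℂ) →ₗ[ℝ] ℝ),
      ↑B ⊆ A ∧ B.card = 2 * n ∧ (∀ b ∈ B, 0 < φ b) ∧
      (∀ u ∈ B, ∀ v ∈ B, u ≠ v → u - v ∉ A) := by
  intro n
  induction n with
  | zero =>
    intro A _ _ _
    exact ⟨∅, 0, by simp, by simp, by simp, by simp⟩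
  | succ n ih =>
    intro A hcube hbasis hI
    -- closure facts
    have hAneg : ∀ v ∈ A, -v ∈ A := by
      intro v hv
      have h2 := hI _ (hI _ hv)
      rwa [smul_smul, Complex.I_mul_I, neg_one_smul] at h2
    have hAnegI : ∀ v ∈ A, (-Complex.I) • v ∈ A := by
      intro v hv
      have := hAneg _ (hI _ hv)
      rwa [← neg_smul] at this
    -- the zero-section A₀
    set A₀ : Set (Fin n → ℂ) := {y | (Fin.snoc y (0:ℂ) : Fin (n+1) → ℂ) ∈ A} with hA₀def
    have hcube₀ : A₀ ⊆ {v | ∀ t, v t ∈ ({0, 1, -1, Complex.I, -Complex.I} : Set ℂ)} := by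
      intro y hy t
      have := hcube hy (Fin.castSucc t)
      rwa [Fin.snoc_castSucc] at this
    have hbasis₀ : ∀ k : Fin n, Pi.single k (1 : ℂ) ∈ A₀ := by
      intro k
      show (Fin.snoc (Pi.single k (1:ℂ)) (0:ℂ) : Fin (n+1) → ℂ) ∈ A
      rw [snoc_single]
      exact hbasis _
    have hI₀ : ∀ y ∈ A₀, Complex.I • y ∈ A₀ := by
      intro y hy
      show (Fin.snoc (Complex.I • y) (0:ℂ) : Fin (n+1) → ℂ) ∈ A
      have := hI _ hy
      rwa [snoc_smul, mul_zero] at this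
    obtain ⟨B₀, φ, hB₀A, hB₀card, hB₀pos, hB₀free⟩ := ih A₀ hcube₀ hbasis₀ hI₀
    -- the one-section C
    set C : Set (Fin n → ℂ) := {y | (Fin.snoc y (1:ℂ) : Fin (n+1) → ℂ) ∈ A} with hCdef
    have hC0 : (0 : Fin n → ℂ) ∈ C := by
      show (Fin.snoc (0 : Fin n → ℂ) (1:ℂ) : Fin (n+1) → ℂ) ∈ A
      rw [snoc_zero_single]; exact hbasis _
    have hCfin : C.Finite := by
      have hAfin : A.Finite := (cube_finite (n+1)).subset hcube
      have : C = (fun y : Fin n → ℂ => (Fin.snoc y (1:ℂ) : Fin (n+1) → ℂ)) ⁻¹' A := rfl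
      rw [this]
      exact Set.Finite.preimage ((snoc_inj (1:ℂ)).injOn) hAfin
    obtain ⟨z₀, hz₀C, hz₀min⟩ := Set.exists_min_image C (fun z => φ z) hCfin ⟨0, hC0⟩
    obtain ⟨z₁, hz₁C, hz₁min⟩ :=
      Set.exists_min_image C (fun z => φ (Complex.I • z)) hCfin ⟨0, hC0⟩
    set L : (Fin n → ℂ) → (Fin (n+1) → ℂ) := fun y => Fin.snoc y (0:ℂ) with hLdef
    set w₀ : Fin (n+1) → ℂ := Fin.snoc z₀ (1:ℂ) with hw₀def
    set w₁ : Fin (n+1) → ℂ := Fin.snoc (Complex.I • z₁) Complex.I with hw₁def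
    have hw₀A : w₀ ∈ A := hz₀C
    have hw₁A : w₁ ∈ A := by
      have := hI _ hz₁C
      rwa [snoc_smul, mul_one] at this
    -- the new set
    have hw₀w₁ : w₀ ≠ w₁ := by
      intro h
      have := congrFun h (Fin.last n)
      simp only [hw₀def, hw₁def, Fin.snoc_last] at this
      exact (by norm_num [Complex.ext_iff] : (1:ℂ) ≠ Complex.I) this
    have hw₀img : w₀ ∉ B₀.image L := by
      intro h
      obtain ⟨b, _, hb⟩ := Finset.mem_image.mp h
      have := congrFun hb (Fin.last n)
      simp only [hLdef, hw₀def, Fin.snoc_last] at this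
      exact one_ne_zero this.symm
    have hw₁img : w₁ ∉ B₀.image L := by
      intro h
      obtain ⟨b, _, hb⟩ := Finset.mem_image.mp h
      have := congrFun hb (Fin.last n)
      simp only [hLdef, hw₁def, Fin.snoc_last] at this
      exact Complex.I_ne_zero this.symm
    set Φ : (Fin (n+1) → ℂ) →ₗ[ℝ] ℝ :=
      φ.comp (LinearMap.funLeft ℝ ℂ Fin.castSucc) +
        (1 + |φ z₀| + |φ (Complex.I • z₁)|) •
          ((Complex.reLm + Complex.imLm).comp
            (LinearMap.proj (Fin.last n) : (Fin (n+1) → ℂ) →ₗ[ℝ] ℂ)) with hΦdef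
    refine ⟨insert w₀ (insert w₁ (B₀.image L)), Φ, ?_, ?_, ?_, ?_⟩
    · -- subset of A
      intro x hx
      simp only [Finset.coe_insert, Set.mem_insert_iff, Finset.coe_image, Set.mem_image,
        Finset.mem_coe] at hx
      rcases hx with rfl | rfl | ⟨b, hb, rfl⟩
      · exact hw₀A
      · exact hw₁A
      · exact hB₀A hb
    · -- cardinality
      rw [Finset.card_insert_of_notMem (by
          simp only [Finset.mem_insert]
          push_neg
          exact ⟨hw₀w₁, hw₀img⟩),
        Finset.card_insert_of_notMem hw₁img,
        Finset.card_image_of_injective _ (snoc_inj (0:ℂ)), hB₀card]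
      ring
    · -- positivity
      have heval : ∀ (y : Fin n → ℂ) (c : ℂ),
          Φ (Fin.snoc y c : Fin (n+1) → ℂ)
          = φ y + (1 + |φ z₀| + |φ (Complex.I • z₁)|) * (c.re + c.im) := by
        intro y c
        have h1 : (LinearMap.funLeft ℝ ℂ Fin.castSucc) (Fin.snoc y c : Fin (n+1) → ℂ) = y := by
          funext i
          rw [LinearMap.funLeft_apply]
          exact @Fin.snoc_castSucc n (fun _ => ℂ) c y i
        rw [hΦdef]
        simp [LinearMap.add_apply, LinearMap.comp_apply, LinearMap.smul_apply,
          LinearMap.proj_apply, h1, Fin.snoc_last, smul_eq_mul, Complex.reLm_coe,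
          Complex.imLm_coe]
      intro b hb
      simp only [Finset.mem_insert, Finset.mem_image] at hb
      have habs0 := abs_nonneg (φ z₀)
      have habs1 := abs_nonneg (φ (Complex.I • z₁))
      have hle0 := neg_abs_le (φ z₀)
      have hle1 := neg_abs_le (φ (Complex.I • z₁))
      rcases hb with rfl | rfl | ⟨b', hb', rfl⟩
      · rw [hw₀def, heval]
        simp only [Complex.one_re, Complex.one_im]
        nlinarith
      · rw [hw₁def, heval]
        simp only [Complex.I_re, Complex.I_im]
        nlinarith
      · rw [hLdef, heval]
        simp only [Complex.zero_re, Complex.zero_im]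
        have := hB₀pos b' hb'
        nlinarith
    · -- difference-free
      have hflip : ∀ x y : Fin (n+1) → ℂ, (x - y ∉ A) → (y - x ∉ A) := by
        intro x y hxy h
        have := hAneg _ h
        rw [neg_sub] at this
        exact hxy this
      have hK0 : ∀ b ∈ B₀, w₀ - L b ∉ A := by
        intro b hb h
        rw [hw₀def, hLdef, snoc_sub_s14, sub_zero] at h
        have hmem : z₀ - b ∈ C := h
        have hle := hz₀min _ hmem
        rw [map_sub] at hle
        have := hB₀pos b hb
        linarith
      have hK1 : ∀ b ∈ B₀, w₁ - L b ∉ A := by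
        intro b hb h
        have h2 := hAnegI _ h
        rw [hw₁def, hLdef, snoc_sub_s14, sub_zero, snoc_smul] at h2
        have e1 : (-Complex.I) * Complex.I = 1 := by
          rw [neg_mul, Complex.I_mul_I, neg_neg]
        have e2 : (-Complex.I) • (Complex.I • z₁ - b) = z₁ - (-Complex.I) • b := by
          rw [smul_sub, smul_smul, e1, one_smul]
        rw [e1, e2] at h2
        have hmem : z₁ - (-Complex.I) • b ∈ C := h2
        have hle := hz₁min _ hmem
        have e3 : Complex.I • (z₁ - (-Complex.I) • b) = Complex.I • z₁ - b := by
          rw [smul_sub, smul_smul]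
          rw [mul_neg, Complex.I_mul_I, neg_neg, one_smul]
        rw [e3, map_sub] at hle
        have := hB₀pos b hb
        linarith
      have hK01 : w₀ - w₁ ∉ A := by
        intro h
        have := hcube h (Fin.last n)
        rw [Pi.sub_apply, hw₀def, hw₁def, Fin.snoc_last, Fin.snoc_last] at this
        exact one_sub_I_notMem this
      have hK10 : w₁ - w₀ ∉ A := by
        intro h
        have := hcube h (Fin.last n)
        rw [Pi.sub_apply, hw₀def, hw₁def, Fin.snoc_last, Fin.snoc_last] at this
        exact I_sub_one_notMem this
      have hKll : ∀ b ∈ B₀, ∀ b' ∈ B₀, L b ≠ L b' → L b - L b' ∉ A := by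
        intro b hb b' hb' hne h
        rw [hLdef, snoc_sub_s14, sub_zero] at h
        have hbb' : b ≠ b' := fun e => hne (congrArg L e)
        exact hB₀free b hb b' hb' hbb' h
      intro u hu v hv huv
      simp only [Finset.mem_insert, Finset.mem_image] at hu hv
      rcases hu with rfl | rfl | ⟨b, hb, rfl⟩ <;> rcases hv with rfl | rfl | ⟨b', hb', rfl⟩
      · exact absurd rfl huv
      · exact hK01
      · exact hK0 b' hb'
      · exact hK10
      · exact absurd rfl huv
      · exact hK1 b' hb'
      · exact hflip _ _ (hK0 b hb)
      · exact hflip _ _ (hK1 b hb)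
      · exact hKll b hb b' hb' huv

/-- **`K_ℂ(2n+1) ≤ n` (Proposition 3.5).** For `n ≥ 1`, any subset `A` of
`V_n = {0, ±1, ±i}^n ⊆ ℂ^n` containing all standard basis vectors and closed under
multiplication by `i` admits a difference-free (w.r.t. `A`) subset of cardinality `2n+1`. -/
theorem complex_kottman_odd (n : ℕ) (hn : 1 ≤ n) (A : Set (Fin n → ℂ))
    (hcube : A ⊆ {v | ∀ t, v t ∈ ({0, 1, -1, Complex.I, -Complex.I} : Set ℂ)})
    (hbasis : ∀ k : Fin n, Pi.single k (1 : ℂ) ∈ A)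
    (hI : ∀ v ∈ A, Complex.I • v ∈ A) :
    ∃ B : Finset (Fin n → ℂ), ↑B ⊆ A ∧ B.card = 2 * n + 1 ∧
      ∀ u ∈ B, ∀ v ∈ B, u ≠ v → u - v ∉ A := by
  obtain ⟨B, φ, hBA, hBcard, hBpos, hBfree⟩ := kottman_aux n A hcube hbasis hI
  have hAneg : ∀ v ∈ A, -v ∈ A := by
    intro v hv
    have h2 := hI _ (hI _ hv)
    rwa [smul_smul, Complex.I_mul_I, neg_one_smul] at h2
  have hAfin : A.Finite := (cube_finite n).subset hcube
  have hAne : A.Nonempty := ⟨Pi.single ⟨0, hn⟩ 1, hbasis _⟩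
  obtain ⟨x, hxA, hxmin⟩ := Set.exists_min_image A (fun a => φ a) hAfin hAne
  have hxnonpos : φ x ≤ 0 := by
    have h1 := hxmin _ (hbasis ⟨0, hn⟩)
    have h2 := hxmin _ (hAneg _ (hbasis ⟨0, hn⟩))
    rw [map_neg] at h2
    linarith
  have hxB : x ∉ B := by
    intro h
    have := hBpos x h
    linarith
  refine ⟨insert x B, ?_, ?_, ?_⟩
  · intro u hu
    simp only [Finset.coe_insert, Set.mem_insert_iff, Finset.mem_coe] at hu
    rcases hu with rfl | hu'
    · exact hxA
    · exact hBA hu'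
  · rw [Finset.card_insert_of_notMem hxB, hBcard]
  · intro u hu v hv huv
    rcases Finset.mem_insert.mp hu with rfl | hu' <;> rcases Finset.mem_insert.mp hv with rfl | hv'
    · exact absurd rfl huv
    · intro h
      have hle := hxmin _ h
      rw [map_sub] at hle
      have := hBpos v hv'
      linarith
    · intro h
      have h2 := hAneg _ h
      rw [neg_sub] at h2
      have hle := hxmin _ h2
      rw [map_sub] at hle
      have := hBpos u hu'
      linarith
    · exact hBfree u hu' v hv' huv
end
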